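/- Let m and n be nonnegative integers with n > 0, let x_0, ..., x_{n-1} be the positive zeros of P̄^m_{m+2n}, and let ρ_0, ..., ρ_{n-1} be the corresponding Gauss–Jacobi quadrature weights. Then the n × n real matrix U with entries U_{ij} = sqrt(ρ_i) · P̄^m_{m+2j}(x_i), for 0 ≤ i, j ≤ n-1, is orthogonal (i.e., U^T U = I). -/

import Mathlib

/-!
Write `P̄^m_l(x) = (1 - x²)^(m/2) Q_l(x)` with a polynomial `Q_l` (`nalfPoly m l`). The `Q_{m+k}`
satisfy the symmetric three-term recurrence `x Q_{m+k+1} = a_{m+k} Q_{m+k} + a_{m+k+1} Q_{m+k+2}`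
with `a_l = recCoef m l`, so the even ones `p_j = Q_{m+2j}` satisfy a symmetric three-term
recurrence in `x²`. By the Christoffel–Darboux identity, `∑_{j<n} p_j(y) p_j(z) = 0` for two nodes
`y ≠ z` (zeros of `p_n` in `(0, 1)`), so distinct rows of `U` are orthogonal. The confluent
identity, combined with `(1 - y²) Q'_{m+2n}(y) = (2m+4n+1) a_{m+2n-1} Q_{m+2n-1}(y)` at a node,
gives `ρ(y) ∑_{j<n} P̄^m_{m+2j}(y)² = 1`, so the rows have norm one. Hence `U Uᵀ = 1`, i.e.
`Uᵀ U = 1`.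
-/

open scoped Nat Matrix

/-- The Legendre polynomial of degree `l`, via Rodrigues' formula. -/
noncomputable def legendreP (l : ℕ) : ℝ → ℝ := fun x =>
  (1 / (2 ^ l * (l ! : ℝ))) * iteratedDeriv l (fun y : ℝ => (y ^ 2 - 1) ^ l) x

/-- The normalized associated Legendre function `P̄_l^m`. -/
noncomputable def nalf (m l : ℕ) : ℝ → ℝ := fun x =>
  Real.sqrt ((2 * l + 1) / 2 * ((l - m)! : ℝ) / ((l + m)! : ℝ)) *
    (1 - x ^ 2) ^ ((m : ℝ) / 2) * iteratedDeriv m (legendreP l) x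

/-- The spectral (l²-operator) norm of a real matrix. -/
noncomputable def specNorm {α β : Type*} [Fintype α] [Fintype β] [DecidableEq α] [DecidableEq β]
    (A : Matrix α β ℝ) : ℝ :=
  ‖LinearMap.toContinuousLinearMap (Matrix.toEuclideanLin A)‖

/-- The singular values of a real matrix, listed in decreasing order. -/
noncomputable def singularValues {p q : ℕ} (A : Matrix (Fin p) (Fin q) ℝ) : List ℝ :=
  List.insertionSort (· ≥ ·)
    (List.ofFn fun i => Real.sqrt ((show (Aᵀ * A).IsHermitian by
      simpa [Matrix.conjTranspose_eq_transpose_of_trivial] using Matrix.isHermitian_conjTranspose_mul_self A).eigenvalues i))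

noncomputable def ccoef (m l : ℕ) : ℝ :=
  Real.sqrt ((((l : ℝ) - m + 1) * ((l : ℝ) - m + 2) * ((l : ℝ) + m + 1) * ((l : ℝ) + m + 2)) /
    ((2 * (l : ℝ) + 1) * (2 * (l : ℝ) + 3) ^ 2 * (2 * (l : ℝ) + 5)))

noncomputable def dcoef (m l : ℕ) : ℝ :=
  (2 * (l : ℝ) * ((l : ℝ) + 1) - 2 * (m : ℝ) ^ 2 - 1) /
    ((2 * (l : ℝ) - 1) * (2 * (l : ℝ) + 3))

open Polynomial

namespace AssocLegendre

section ChristoffelDarboux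

variable {R : Type*} [CommRing R] {p : ℕ → R[X]}

theorem christoffel_darboux {q : R[X]} {a b : ℕ → R} {b₀ : R}
    (h₀ : q * p 0 = C b₀ * p 0 + C (a 0) * p 1)
    (h : ∀ j, q * p (j + 1) = C (a j) * p j + C (b j) * p (j + 1) + C (a (j + 1)) * p (j + 2))
    (N : ℕ) (x y : R) :
    (q.eval x - q.eval y) * ∑ j ∈ Finset.range (N + 1), (p j).eval x * (p j).eval y =
      a N * ((p (N + 1)).eval x * (p N).eval y - (p N).eval x * (p (N + 1)).eval y) := by
  have ev₀ z := congrArg (eval z) h₀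
  have ev j z := congrArg (eval z) (h j)
  simp only [eval_mul, eval_add, eval_C] at ev₀ ev
  induction N with
  | zero =>
    simp only [zero_add, Finset.sum_range_one]
    linear_combination (p 0).eval y * ev₀ x - (p 0).eval x * ev₀ y
  | succ N ih =>
    rw [Finset.sum_range_succ]
    linear_combination ih + (p (N + 1)).eval y * ev N x - (p (N + 1)).eval x * ev N y

theorem christoffel_darboux_confluent {q : R[X]} {a b : ℕ → R} {b₀ : R}
    (h₀ : q * p 0 = C b₀ * p 0 + C (a 0) * p 1)
    (h : ∀ j, q * p (j + 1) = C (a j) * p j + C (b j) * p (j + 1) + C (a (j + 1)) * p (j + 2))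
    (N : ℕ) (x : R) :
    (derivative q).eval x * ∑ j ∈ Finset.range (N + 1), (p j).eval x ^ 2 =
      a N * ((derivative (p (N + 1))).eval x * (p N).eval x -
        (p (N + 1)).eval x * (derivative (p N)).eval x) := by
  have ev₀ := congrArg (eval x) h₀
  have ev j := congrArg (eval x) (h j)
  have dev₀ := congrArg (eval x ∘ derivative) h₀
  have dev j := congrArg (eval x ∘ derivative) (h j)
  simp only [Function.comp_apply, derivative_mul, derivative_add, derivative_C, zero_mul,
    zero_add, eval_mul, eval_add, eval_C] at ev₀ ev dev₀ dev
  induction N with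
  | zero =>
    simp only [zero_add, Finset.sum_range_one]
    linear_combination (p 0).eval x * dev₀ - (derivative (p 0)).eval x * ev₀
  | succ N ih =>
    rw [Finset.sum_range_succ]
    linear_combination ih + (p (N + 1)).eval x * dev N - (derivative (p (N + 1))).eval x * ev N

variable {α : ℕ → R}

theorem X_sq_mul_even_of_X_mul (h₀ : X * p 0 = C (α 0) * p 1)
    (h : ∀ k, X * p (k + 1) = C (α k) * p k + C (α (k + 1)) * p (k + 2)) :
    X ^ 2 * p 0 = C (α 0 ^ 2) * p 0 + C (α 0 * α 1) * p 2 ∧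
      ∀ j, X ^ 2 * p (2 * j + 2) = C (α (2 * j) * α (2 * j + 1)) * p (2 * j) +
        C (α (2 * j + 1) ^ 2 + α (2 * j + 2) ^ 2) * p (2 * j + 2) +
          C (α (2 * j + 2) * α (2 * j + 3)) * p (2 * j + 4) := by
  simp only [map_mul, map_add, map_pow]
  refine ⟨by linear_combination X * h₀ + C (α 0) * h 0, fun j => ?_⟩
  linear_combination X * h (2 * j + 1) + C (α (2 * j + 1)) * h (2 * j) +
    C (α (2 * j + 2)) * h (2 * j + 2)

theorem christoffel_darboux_even (h₀ : X * p 0 = C (α 0) * p 1)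
    (h : ∀ k, X * p (k + 1) = C (α k) * p k + C (α (k + 1)) * p (k + 2)) (N : ℕ) (x y : R) :
    (x ^ 2 - y ^ 2) * ∑ j ∈ Finset.range (N + 1), (p (2 * j)).eval x * (p (2 * j)).eval y =
      α (2 * N) * α (2 * N + 1) * ((p (2 * N + 2)).eval x * (p (2 * N)).eval y -
        (p (2 * N)).eval x * (p (2 * N + 2)).eval y) := by
  have h₂ := X_sq_mul_even_of_X_mul h₀ h
  have cd := christoffel_darboux (p := fun j => p (2 * j))
    (a := fun j => α (2 * j) * α (2 * j + 1)) h₂.1 h₂.2 N x y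
  rwa [eval_pow, eval_X, eval_pow, eval_X, mul_add, mul_one] at cd

theorem christoffel_darboux_even_confluent (h₀ : X * p 0 = C (α 0) * p 1)
    (h : ∀ k, X * p (k + 1) = C (α k) * p k + C (α (k + 1)) * p (k + 2)) (N : ℕ) (x : R) :
    2 * x * ∑ j ∈ Finset.range (N + 1), (p (2 * j)).eval x ^ 2 =
      α (2 * N) * α (2 * N + 1) * ((derivative (p (2 * N + 2))).eval x * (p (2 * N)).eval x -
        (p (2 * N + 2)).eval x * (derivative (p (2 * N))).eval x) := by
  have h₂ := X_sq_mul_even_of_X_mul h₀ h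
  have cd := christoffel_darboux_confluent (p := fun j => p (2 * j))
    (a := fun j => α (2 * j) * α (2 * j + 1)) h₂.1 h₂.2 N x
  rwa [derivative_X_sq, eval_mul, eval_C, eval_X, mul_add, mul_one] at cd

end ChristoffelDarboux

section IteratedDerivatives

theorem iteratedDeriv_eval {𝕜 : Type*} [NontriviallyNormedField 𝕜] (p : 𝕜[X]) (k : ℕ) :
    iteratedDeriv k (fun x => p.eval x) = fun x => (derivative^[k] p).eval x := by
  induction k generalizing p with
  | zero => rfl
  | succ k ih =>
    rw [iteratedDeriv_succ', funext fun x => p.deriv (x := x), ih, Function.iterate_succ_apply]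

theorem iterate_derivative_mul_X_succ {R : Type*} [CommRing R] (k : ℕ) (p : R[X]) :
    derivative^[k + 1] (p * X) =
      derivative^[k + 1] p * X + ((k : R[X]) + 1) * derivative^[k] p := by
  rw [iterate_derivative_mul_X, Nat.add_sub_cancel, nsmul_eq_mul]
  push_cast
  ring

theorem iterate_derivative_X_sq_sub_one_mul_derivative {R : Type*} [CommRing R] (k : ℕ)
    (p : R[X]) :
    derivative^[k + 1] ((X ^ 2 - 1) * derivative p) =
      (X ^ 2 - 1) * derivative^[k + 2] p + 2 * ((k : R[X]) + 1) * X * derivative^[k + 1] p +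
        (k : R[X]) * ((k : R[X]) + 1) * derivative^[k] p := by
  rw [show (X ^ 2 - 1) * derivative p = derivative p * X * X - derivative p by ring,
    iterate_derivative_sub, iterate_derivative_mul_X_succ, iterate_derivative_derivative_mul_X,
    iterate_derivative_derivative_mul_X, ← Function.iterate_succ_apply derivative (k + 1)]
  simp only [nsmul_eq_mul, Nat.cast_add, Nat.cast_one]
  ring

end IteratedDerivatives

section LegendrePolynomial

noncomputable def legendrePoly (l : ℕ) : ℝ[X] :=
  C (1 / (2 ^ l * (l ! : ℝ))) * derivative^[l] ((X ^ 2 - 1) ^ l)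

theorem legendreP_eq_eval (l : ℕ) : legendreP l = fun x => (legendrePoly l).eval x := by
  ext x
  have hu : (fun y : ℝ => (y ^ 2 - 1) ^ l) = fun y => ((X ^ 2 - 1) ^ l : ℝ[X]).eval y := by
    simp
  rw [legendreP, hu, iteratedDeriv_eval, legendrePoly, eval_mul, eval_C]

theorem iterate_derivative_X_sq_sub_one_pow (l j : ℕ) :
    derivative^[l + j] ((X ^ 2 - 1) ^ l : ℝ[X]) =
      ((2 ^ l * l ! : ℕ) : ℝ[X]) * derivative^[j] (legendrePoly l) := by
  have hr : ((2 ^ l * l ! : ℕ) : ℝ[X]) * C (1 / (2 ^ l * (l ! : ℝ))) = 1 := by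
    rw [← map_natCast C, ← C_mul, Nat.cast_mul, Nat.cast_pow, Nat.cast_ofNat,
      mul_one_div_cancel (by positivity), C_1]
  rw [legendrePoly, iterate_derivative_C_mul, ← mul_assoc, hr, one_mul, add_comm,
    Function.iterate_add_apply]

theorem iterate_derivative_X_sq_sub_one_pow_self (l : ℕ) :
    derivative^[l] ((X ^ 2 - 1) ^ l : ℝ[X]) = ((2 ^ l * l ! : ℕ) : ℝ[X]) * legendrePoly l :=
  iterate_derivative_X_sq_sub_one_pow l 0

theorem derivative_X_sq_sub_one_pow_succ (l : ℕ) :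
    derivative ((X ^ 2 - 1) ^ (l + 1) : ℝ[X]) = 2 * ((l : ℝ[X]) + 1) * ((X ^ 2 - 1) ^ l * X) := by
  rw [derivative_pow_succ, derivative_sub, derivative_X_sq, derivative_one, sub_zero]
  simp only [map_add, map_natCast, map_one, map_ofNat]
  ring

theorem X_sq_sub_one_mul_derivative_pow (l : ℕ) :
    (X ^ 2 - 1) * derivative ((X ^ 2 - 1) ^ l : ℝ[X]) = 2 * (l : ℝ[X]) * ((X ^ 2 - 1) ^ l * X) := by
  rcases l with _ | l
  · simp
  · rw [derivative_X_sq_sub_one_pow_succ]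
    push_cast
    ring

theorem legendrePoly_ode (l : ℕ) :
    (X ^ 2 - 1) * derivative (derivative (legendrePoly l)) +
      2 * X * derivative (legendrePoly l) = (l : ℝ[X]) * ((l : ℝ[X]) + 1) * legendrePoly l := by
  have key := congrArg (derivative^[l + 1]) (X_sq_sub_one_mul_derivative_pow l)
  rw [iterate_derivative_X_sq_sub_one_mul_derivative,
    show 2 * (l : ℝ[X]) * ((X ^ 2 - 1) ^ l * X) = ((2 * l : ℕ) : ℝ[X]) * ((X ^ 2 - 1) ^ l * X) by
      push_cast; ring,
    iterate_derivative_natCast_mul, iterate_derivative_mul_X_succ,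
    iterate_derivative_X_sq_sub_one_pow, iterate_derivative_X_sq_sub_one_pow,
    iterate_derivative_X_sq_sub_one_pow_self] at key
  simp only [Function.iterate_succ_apply', Function.iterate_zero_apply] at key
  apply mul_left_cancel₀ (Nat.cast_ne_zero.mpr (by positivity) : ((2 ^ l * l ! : ℕ) : ℝ[X]) ≠ 0)
  push_cast at key ⊢
  linear_combination key

theorem derivative_legendrePoly_succ (l : ℕ) :
    derivative (legendrePoly (l + 1)) =
      X * derivative (legendrePoly l) + ((l : ℝ[X]) + 1) * legendrePoly l := by
  have key := congrArg (derivative^[l + 1]) (derivative_X_sq_sub_one_pow_succ l)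
  rw [← Function.iterate_succ_apply, Nat.succ_eq_add_one, iterate_derivative_X_sq_sub_one_pow,
    show 2 * ((l : ℝ[X]) + 1) * ((X ^ 2 - 1) ^ l * X) =
      ((2 * (l + 1) : ℕ) : ℝ[X]) * ((X ^ 2 - 1) ^ l * X) by push_cast; ring,
    iterate_derivative_natCast_mul, iterate_derivative_mul_X_succ,
    iterate_derivative_X_sq_sub_one_pow, iterate_derivative_X_sq_sub_one_pow_self] at key
  simp only [Function.iterate_one] at key
  apply mul_left_cancel₀
    (Nat.cast_ne_zero.mpr (by positivity) : ((2 ^ (l + 1) * (l + 1)! : ℕ) : ℝ[X]) ≠ 0)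
  rw [key, Nat.factorial_succ, pow_succ]
  push_cast
  ring

theorem succ_mul_legendrePoly_succ (l : ℕ) :
    ((l : ℝ[X]) + 1) * legendrePoly (l + 1) =
      ((l : ℝ[X]) + 1) * X * legendrePoly l + (X ^ 2 - 1) * derivative (legendrePoly l) := by
  have h₁ := derivative_legendrePoly_succ l
  have h₂ := congrArg derivative h₁
  simp only [derivative_add, derivative_mul, derivative_X, derivative_natCast, derivative_one,
    zero_mul, zero_add, one_mul, add_zero] at h₂
  have hode := legendrePoly_ode l
  have hode₁ := legendrePoly_ode (l + 1)
  apply mul_left_cancel₀ (by exact_mod_cast (show l + 2 ≠ 0 by omega) : ((l : ℝ[X]) + 2) ≠ 0)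
  push_cast at hode₁
  linear_combination (X ^ 2 - 1) * h₂ + 2 * X * h₁ + X * hode - hode₁

theorem X_sq_sub_one_mul_derivative_legendrePoly_succ (l : ℕ) :
    (X ^ 2 - 1) * derivative (legendrePoly (l + 1)) =
      ((l : ℝ[X]) + 1) * (X * legendrePoly (l + 1) - legendrePoly l) := by
  linear_combination (X ^ 2 - 1) * derivative_legendrePoly_succ l - X * succ_mul_legendrePoly_succ l

theorem legendrePoly_bonnet (l : ℕ) :
    (2 * (l : ℝ[X]) + 3) * X * legendrePoly (l + 1) =
      ((l : ℝ[X]) + 2) * legendrePoly (l + 2) + ((l : ℝ[X]) + 1) * legendrePoly l := by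
  have h := succ_mul_legendrePoly_succ (l + 1)
  push_cast at h
  linear_combination -h - X_sq_sub_one_mul_derivative_legendrePoly_succ l

theorem X_mul_derivative_legendrePoly_succ_sub (l : ℕ) :
    X * derivative (legendrePoly (l + 1)) - derivative (legendrePoly l) =
      ((l : ℝ[X]) + 1) * legendrePoly (l + 1) := by
  linear_combination X * derivative_legendrePoly_succ l - succ_mul_legendrePoly_succ l

theorem derivative_legendrePoly_add_two_sub (l : ℕ) :
    derivative (legendrePoly (l + 2)) - derivative (legendrePoly l) =
      (2 * (l : ℝ[X]) + 3) * legendrePoly (l + 1) := by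
  have h := derivative_legendrePoly_succ (l + 1)
  push_cast at h
  linear_combination h + X_mul_derivative_legendrePoly_succ_sub l

theorem iterate_derivative_legendrePoly_add_two_sub (m l : ℕ) :
    derivative^[m + 1] (legendrePoly (l + 2)) - derivative^[m + 1] (legendrePoly l) =
      (2 * (l : ℝ[X]) + 3) * derivative^[m] (legendrePoly (l + 1)) := by
  have h := congrArg (derivative^[m]) (derivative_legendrePoly_add_two_sub l)
  rw [iterate_derivative_sub, ← Function.iterate_succ_apply, ← Function.iterate_succ_apply,
    show (2 * (l : ℝ[X]) + 3) = ((2 * l + 3 : ℕ) : ℝ[X]) by push_cast; ring,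
    iterate_derivative_natCast_mul] at h
  exact_mod_cast h

theorem X_mul_iterate_derivative_legendrePoly_succ_sub (m l : ℕ) :
    X * derivative^[m + 1] (legendrePoly (l + 1)) - derivative^[m + 1] (legendrePoly l) =
      ((l : ℝ[X]) + 1 - (m : ℝ[X])) * derivative^[m] (legendrePoly (l + 1)) := by
  have h := congrArg (derivative^[m]) (X_mul_derivative_legendrePoly_succ_sub l)
  rw [iterate_derivative_sub, mul_comm X, iterate_derivative_derivative_mul_X,
    ← Function.iterate_succ_apply, Nat.succ_eq_add_one, nsmul_eq_mul,
    show ((l : ℝ[X]) + 1) = ((l + 1 : ℕ) : ℝ[X]) by push_cast; ring,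
    iterate_derivative_natCast_mul] at h
  push_cast at h
  linear_combination h

theorem iterate_derivative_legendrePoly_bonnet (m l : ℕ) :
    (2 * (l : ℝ[X]) + 3) * X * derivative^[m] (legendrePoly (l + 1)) =
      ((l : ℝ[X]) + 2 - (m : ℝ[X])) * derivative^[m] (legendrePoly (l + 2)) +
        ((l : ℝ[X]) + 1 + (m : ℝ[X])) * derivative^[m] (legendrePoly l) := by
  induction m with
  | zero => simpa using legendrePoly_bonnet l
  | succ m ih =>
    have h := congrArg derivative ih
    simp only [derivative_mul, derivative_add, derivative_sub, derivative_natCast, derivative_ofNat,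
      derivative_one, derivative_X, ← Function.iterate_succ_apply' derivative,
      Nat.succ_eq_add_one] at h
    push_cast
    linear_combination h + iterate_derivative_legendrePoly_add_two_sub m l

theorem one_sub_X_sq_mul_iterate_derivative_legendrePoly_succ (m l : ℕ) :
    (1 - X ^ 2) * derivative^[m + 1] (legendrePoly (l + 1)) =
      ((l : ℝ[X]) + 1 + (m : ℝ[X])) * derivative^[m] (legendrePoly l) -
        ((l : ℝ[X]) + 1 - (m : ℝ[X])) * X * derivative^[m] (legendrePoly (l + 1)) := by
  induction m with
  | zero =>
    simp only [Nat.cast_zero, add_zero, sub_zero, Function.iterate_zero_apply, zero_add,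
      Function.iterate_one]
    linear_combination -X_sq_sub_one_mul_derivative_legendrePoly_succ l
  | succ m ih =>
    have h := congrArg derivative ih
    simp only [derivative_mul, derivative_add, derivative_sub, derivative_natCast, derivative_one,
      derivative_X, derivative_X_sq, map_ofNat, ← Function.iterate_succ_apply' derivative,
      Nat.succ_eq_add_one] at h
    push_cast
    linear_combination h + X_mul_iterate_derivative_legendrePoly_succ_sub m l

theorem natDegree_legendrePoly_le (l : ℕ) : (legendrePoly l).natDegree ≤ l := by
  have hu : ((X ^ 2 - 1) ^ l : ℝ[X]).natDegree ≤ 2 * l := by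
    rw [natDegree_pow, show (X ^ 2 - 1 : ℝ[X]).natDegree = 2 by compute_degree!, mul_comm]
  refine (natDegree_C_mul_le _ _).trans ((natDegree_iterate_derivative _ _).trans ?_)
  omega

theorem iterate_derivative_legendrePoly_of_lt {m l : ℕ} (h : l < m) :
    derivative^[m] (legendrePoly l) = 0 :=
  iterate_derivative_eq_zero ((natDegree_legendrePoly_le l).trans_lt h)

theorem eval_iterate_derivative_legendrePoly_self_ne_zero (m : ℕ) (x : ℝ) :
    (derivative^[m] (legendrePoly m)).eval x ≠ 0 := by
  have hmonic : ((X ^ 2 - 1) ^ m : ℝ[X]).Monic := by monicity!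
  have hdeg : ((X ^ 2 - 1) ^ m : ℝ[X]).natDegree = m + m := by
    rw [natDegree_pow, show (X ^ 2 - 1 : ℝ[X]).natDegree = 2 by compute_degree!]
    ring
  have hD : derivative^[m + m] ((X ^ 2 - 1) ^ m : ℝ[X]) = C ((m + m)! : ℝ) := by
    rw [eq_C_of_natDegree_le_zero ((natDegree_iterate_derivative _ _).trans (by omega)),
      coeff_iterate_derivative, zero_add, Nat.descFactorial_self, ← hdeg, coeff_natDegree,
      hmonic.leadingCoeff, nsmul_eq_mul, mul_one]
  rw [legendrePoly, iterate_derivative_C_mul, ← Function.iterate_add_apply, hD, eval_mul, eval_C,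
    eval_C]
  positivity

theorem X_mul_iterate_derivative_legendrePoly_self (m : ℕ) :
    (2 * (m : ℝ[X]) + 1) * X * derivative^[m] (legendrePoly m) =
      derivative^[m] (legendrePoly (m + 1)) := by
  rcases m with _ | m
  · have h := succ_mul_legendrePoly_succ 0
    rw [← Function.iterate_one derivative,
      iterate_derivative_legendrePoly_of_lt zero_lt_one] at h
    simpa using h.symm
  · have h := iterate_derivative_legendrePoly_bonnet (m + 1) m
    rw [iterate_derivative_legendrePoly_of_lt (Nat.lt_succ_self m)] at h
    push_cast at h ⊢
    linear_combination h

end LegendrePolynomial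

section Normalization

noncomputable def nalfConst (m l : ℕ) : ℝ :=
  Real.sqrt ((2 * l + 1) / 2 * ((l - m)! : ℝ) / ((l + m)! : ℝ))

noncomputable def recCoef (m l : ℕ) : ℝ :=
  Real.sqrt (((l : ℝ) + 1 - m) * ((l : ℝ) + 1 + m) / ((2 * (l : ℝ) + 1) * (2 * (l : ℝ) + 3)))

theorem nalfConst_add (m k : ℕ) :
    nalfConst m (m + k) =
      Real.sqrt ((2 * ((m : ℝ) + k) + 1) / 2 * (k ! : ℝ) / ((2 * m + k)! : ℝ)) := by
  rw [nalfConst, Nat.add_sub_cancel_left, show m + k + m = 2 * m + k by ring]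
  push_cast
  rfl

theorem recCoef_add (m k : ℕ) :
    recCoef m (m + k) = Real.sqrt (((k : ℝ) + 1) * (2 * m + k + 1) /
      ((2 * ((m : ℝ) + k) + 1) * (2 * ((m : ℝ) + k) + 3))) := by
  rw [recCoef]
  push_cast
  ring_nf

theorem recCoef_mul_nalfConst (m k : ℕ) :
    (2 * ((m : ℝ) + k) + 3) * recCoef m (m + k) * nalfConst m (m + k) =
      (2 * m + k + 1) * nalfConst m (m + k + 1) := by
  rw [← pow_left_inj₀ (by unfold recCoef nalfConst; positivity)
    (by unfold nalfConst; positivity) two_ne_zero, add_assoc m k 1, nalfConst_add, nalfConst_add,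
    recCoef_add, mul_pow, mul_pow, mul_pow, Real.sq_sqrt (by positivity),
    Real.sq_sqrt (by positivity), Real.sq_sqrt (by positivity),
    show 2 * m + (k + 1) = 2 * m + k + 1 by ring, Nat.factorial_succ, Nat.factorial_succ]
  push_cast
  field_simp
  ring

theorem recCoef_add_sq (m k : ℕ) :
    (2 * ((m : ℝ) + k) + 1) * (2 * ((m : ℝ) + k) + 3) * recCoef m (m + k) ^ 2 =
      (k + 1) * (2 * m + k + 1) := by
  rw [recCoef_add, Real.sq_sqrt (by positivity)]
  field_simp

theorem recCoef_mul_nalfConst_succ (m k : ℕ) :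
    (2 * ((m : ℝ) + k) + 1) * recCoef m (m + k) * nalfConst m (m + k + 1) =
      (k + 1) * nalfConst m (m + k) := by
  apply mul_left_cancel₀ (by positivity : (2 * (m : ℝ) + k + 1) ≠ 0)
  linear_combination nalfConst m (m + k) * recCoef_add_sq m k -
    (2 * ((m : ℝ) + k) + 1) * recCoef m (m + k) * recCoef_mul_nalfConst m k

noncomputable def nalfPoly (m l : ℕ) : ℝ[X] := C (nalfConst m l) * derivative^[m] (legendrePoly l)

theorem X_mul_nalfPoly_self (m : ℕ) : X * nalfPoly m m = C (recCoef m m) * nalfPoly m (m + 1) := by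
  refine Polynomial.funext fun x => ?_
  have h := congrArg (eval x) (X_mul_iterate_derivative_legendrePoly_self m)
  have hB := recCoef_mul_nalfConst_succ m 0
  simp only [eval_mul, eval_add, eval_natCast, eval_ofNat, eval_one, eval_X] at h
  simp only [add_zero, Nat.cast_zero, zero_add, one_mul] at hB
  simp only [nalfPoly, eval_mul, eval_C, eval_X]
  apply mul_left_cancel₀ (by positivity : (2 * (m : ℝ) + 1) ≠ 0)
  linear_combination nalfConst m m * h - (derivative^[m] (legendrePoly (m + 1))).eval x * hB

theorem X_mul_nalfPoly (m k : ℕ) :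
    X * nalfPoly m (m + k + 1) =
      C (recCoef m (m + k)) * nalfPoly m (m + k) +
        C (recCoef m (m + k + 1)) * nalfPoly m (m + k + 2) := by
  refine Polynomial.funext fun x => ?_
  have h := congrArg (eval x) (iterate_derivative_legendrePoly_bonnet m (m + k))
  have hA := recCoef_mul_nalfConst m k
  have hB : (2 * ((m : ℝ) + (k + 1 : ℕ)) + 1) * recCoef m (m + k + 1) * nalfConst m (m + k + 2) =
      ((k + 1 : ℕ) + 1) * nalfConst m (m + k + 1) := recCoef_mul_nalfConst_succ m (k + 1)
  simp only [eval_mul, eval_add, eval_sub, eval_natCast, eval_ofNat, eval_one, eval_X] at h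
  push_cast at h hB
  simp only [nalfPoly, eval_mul, eval_add, eval_C, eval_X]
  apply mul_left_cancel₀ (by positivity : (2 * ((m : ℝ) + k) + 3) ≠ 0)
  linear_combination nalfConst m (m + k + 1) * h
    - (derivative^[m] (legendrePoly (m + k))).eval x * hA
    - (derivative^[m] (legendrePoly (m + k + 2))).eval x * hB

theorem one_sub_X_sq_mul_derivative_nalfPoly (m k : ℕ) :
    (1 - X ^ 2) * derivative (nalfPoly m (m + k + 1)) =
      C ((2 * ((m : ℝ) + k) + 3) * recCoef m (m + k)) * nalfPoly m (m + k) -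
        ((k : ℝ[X]) + 1) * X * nalfPoly m (m + k + 1) := by
  refine Polynomial.funext fun x => ?_
  have h := congrArg (eval x) (one_sub_X_sq_mul_iterate_derivative_legendrePoly_succ m (m + k))
  have hA := recCoef_mul_nalfConst m k
  simp only [eval_mul, eval_add, eval_sub, eval_natCast, eval_one, eval_pow, eval_X] at h
  push_cast at h
  simp only [nalfPoly, derivative_C_mul, ← Function.iterate_succ_apply' derivative, eval_mul,
    eval_sub, eval_add, eval_C, eval_one, eval_pow, eval_X, eval_natCast]
  linear_combination nalfConst m (m + k + 1) * h
    - (derivative^[m] (legendrePoly (m + k))).eval x * hA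

end Normalization

section GaussQuadrature

theorem nalf_eq (m l : ℕ) (x : ℝ) :
    nalf m l x = (1 - x ^ 2) ^ ((m : ℝ) / 2) * (nalfPoly m l).eval x := by
  rw [nalf, legendreP_eq_eval, iteratedDeriv_eval, nalfPoly, eval_mul, eval_C, nalfConst]
  ring

theorem nalf_eq_zero_iff {m l : ℕ} {x : ℝ} (hx : x ^ 2 < 1) :
    nalf m l x = 0 ↔ (nalfPoly m l).eval x = 0 := by
  rw [nalf_eq, mul_eq_zero, or_iff_right (Real.rpow_pos_of_pos (by linarith) _).ne']

theorem nalf_self_ne_zero (m : ℕ) {x : ℝ} (hx : x ^ 2 < 1) : nalf m m x ≠ 0 := by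
  rw [ne_eq, nalf_eq_zero_iff hx, nalfPoly, eval_mul, eval_C, mul_eq_zero, not_or]
  exact ⟨(Real.sqrt_pos.2 (by positivity)).ne',
    eval_iterate_derivative_legendrePoly_self_ne_zero m x⟩

theorem deriv_nalf_of_eval_eq_zero {m l : ℕ} {x : ℝ} (hx : x ^ 2 < 1)
    (h : (nalfPoly m l).eval x = 0) :
    deriv (nalf m l) x = (1 - x ^ 2) ^ ((m : ℝ) / 2) * (derivative (nalfPoly m l)).eval x := by
  have hw := ((hasDerivAt_pow 2 x).const_sub 1).rpow_const (p := (m : ℝ) / 2)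
    (Or.inl (by linarith))
  have hd := hw.fun_mul ((nalfPoly m l).hasDerivAt x)
  rw [funext (nalf_eq m l), hd.deriv, h]
  ring

theorem sum_nalf_mul_nalf_eq_zero {m n : ℕ} {y z : ℝ} (hy : y ^ 2 < 1) (hz : z ^ 2 < 1)
    (hyz : y ^ 2 ≠ z ^ 2) (hy₀ : nalf m (m + 2 * n) y = 0) (hz₀ : nalf m (m + 2 * n) z = 0) :
    ∑ j ∈ Finset.range n, nalf m (m + 2 * j) y * nalf m (m + 2 * j) z = 0 := by
  rcases n with _ | N
  · simp
  have hy' : (nalfPoly m (m + (2 * N + 2))).eval y = 0 := (nalf_eq_zero_iff hy).1 hy₀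
  have hz' : (nalfPoly m (m + (2 * N + 2))).eval z = 0 := (nalf_eq_zero_iff hz).1 hz₀
  have cd := christoffel_darboux_even (p := fun k => nalfPoly m (m + k))
    (α := fun k => recCoef m (m + k)) (X_mul_nalfPoly_self m) (X_mul_nalfPoly m) N y z
  simp only [hy', hz', zero_mul, mul_zero, sub_zero, mul_eq_zero, sub_eq_zero, hyz,
    false_or] at cd
  calc ∑ j ∈ Finset.range (N + 1), nalf m (m + 2 * j) y * nalf m (m + 2 * j) z
      = (1 - y ^ 2) ^ ((m : ℝ) / 2) * (1 - z ^ 2) ^ ((m : ℝ) / 2) *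
          ∑ j ∈ Finset.range (N + 1),
            (nalfPoly m (m + 2 * j)).eval y * (nalfPoly m (m + 2 * j)).eval z := by
        rw [Finset.mul_sum]
        refine Finset.sum_congr rfl fun j _ => ?_
        rw [nalf_eq, nalf_eq]
        ring
    _ = 0 := by rw [cd, mul_zero]

theorem one_sub_sq_mul_derivative_nalfPoly_sq {m N : ℕ} {y : ℝ} (hy₀ : y ≠ 0)
    (hP : (nalfPoly m (m + 2 * N + 2)).eval y = 0) :
    (1 - y ^ 2) * (derivative (nalfPoly m (m + 2 * N + 2))).eval y ^ 2 =
      2 * (2 * m + 4 * N + 5) *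
        ∑ j ∈ Finset.range (N + 1), (nalfPoly m (m + 2 * j)).eval y ^ 2 := by
  have hconf := christoffel_darboux_even_confluent (p := fun k => nalfPoly m (m + k))
    (α := fun k => recCoef m (m + k)) (X_mul_nalfPoly_self m) (X_mul_nalfPoly m) N y
  have hrec : y * (nalfPoly m (m + 2 * N + 1)).eval y =
      recCoef m (m + 2 * N) * (nalfPoly m (m + 2 * N)).eval y +
        recCoef m (m + 2 * N + 1) * (nalfPoly m (m + 2 * N + 2)).eval y := by
    have h := congrArg (eval y) (X_mul_nalfPoly m (2 * N))
    simp only [eval_mul, eval_add, eval_C, eval_X] at h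
    exact h
  have hder : (1 - y ^ 2) * (derivative (nalfPoly m (m + 2 * N + 2))).eval y =
      (2 * ((m : ℝ) + (2 * N + 1 : ℕ)) + 3) * recCoef m (m + 2 * N + 1) *
          (nalfPoly m (m + 2 * N + 1)).eval y -
        (((2 * N + 1 : ℕ) : ℝ) + 1) * y * (nalfPoly m (m + 2 * N + 2)).eval y := by
    have h := congrArg (eval y) (one_sub_X_sq_mul_derivative_nalfPoly m (2 * N + 1))
    simp only [eval_mul, eval_add, eval_sub, eval_C, eval_X, eval_one, eval_pow,
      eval_natCast] at h
    exact h
  simp only [← add_assoc] at hconf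
  rw [hP] at hrec hder hconf
  push_cast at hder
  apply mul_left_cancel₀ hy₀
  set D := (derivative (nalfPoly m (m + 2 * N + 2))).eval y
  linear_combination y * D * hder + (2 * m + 4 * N + 5) * recCoef m (m + 2 * N + 1) * D * hrec -
    (2 * m + 4 * N + 5) * hconf

theorem one_sub_sq_mul_deriv_nalf_sq {m n : ℕ} {y : ℝ} (hy₀ : y ≠ 0) (hy : y ^ 2 < 1)
    (hzero : nalf m (m + 2 * n) y = 0) :
    (1 - y ^ 2) * deriv (nalf m (m + 2 * n)) y ^ 2 =
      2 * (2 * m + 4 * n + 1) * ∑ j ∈ Finset.range n, nalf m (m + 2 * j) y ^ 2 := by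
  rcases n with _ | N
  · exact absurd hzero (nalf_self_ne_zero m hy)
  rw [show m + 2 * (N + 1) = m + 2 * N + 2 by ring] at hzero ⊢
  have hP := (nalf_eq_zero_iff hy).1 hzero
  rw [deriv_nalf_of_eval_eq_zero hy hP]
  simp only [nalf_eq, mul_pow, ← Finset.mul_sum]
  push_cast
  linear_combination
    ((1 - y ^ 2) ^ ((m : ℝ) / 2)) ^ 2 * one_sub_sq_mul_derivative_nalfPoly_sq hy₀ hP

noncomputable def gaussWeight (m n : ℕ) (y : ℝ) : ℝ :=
  2 * (2 * m + 4 * n + 1) / ((1 - y ^ 2) * (deriv (nalf m (m + 2 * n)) y) ^ 2)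

theorem gaussWeight_nonneg (m n : ℕ) {y : ℝ} (hy : y ^ 2 ≤ 1) : 0 ≤ gaussWeight m n y :=
  div_nonneg (by positivity) (mul_nonneg (by linarith) (sq_nonneg _))

theorem sum_nalf_sq_pos {m n : ℕ} {y : ℝ} (hy : y ^ 2 < 1) (hn : n ≠ 0) :
    0 < ∑ j ∈ Finset.range n, nalf m (m + 2 * j) y ^ 2 :=
  Finset.sum_pos' (fun _ _ => sq_nonneg _)
    ⟨0, Finset.mem_range.2 (Nat.pos_of_ne_zero hn), pow_two_pos_of_ne_zero (nalf_self_ne_zero m hy)⟩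

theorem gaussWeight_mul_sum_nalf_sq {m n : ℕ} {y : ℝ} (hy₀ : y ≠ 0) (hy : y ^ 2 < 1)
    (hzero : nalf m (m + 2 * n) y = 0) :
    gaussWeight m n y * ∑ j ∈ Finset.range n, nalf m (m + 2 * j) y ^ 2 = 1 := by
  have hn : n ≠ 0 := by
    rintro rfl
    exact nalf_self_ne_zero m hy hzero
  have hS := sum_nalf_sq_pos (m := m) hy hn
  rw [gaussWeight, one_sub_sq_mul_deriv_nalf_sq hy₀ hy hzero]
  field_simp

end GaussQuadrature

end AssocLegendre

open AssocLegendre in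
theorem transform_matrix_orthogonal_even_general (m n : ℕ) (x : Fin n → ℝ) (hmono : StrictMono x)
    (hzero : ∀ j, x j ∈ Set.Ioo (0 : ℝ) 1 ∧ nalf m (m + 2 * n) (x j) = 0)
    (rho : Fin n → ℝ)
    (hrho : ∀ j, rho j = 2 * (2 * m + 4 * n + 1) /
      ((1 - x j ^ 2) * (deriv (nalf m (m + 2 * n)) (x j)) ^ 2)) :
    (Matrix.of fun i j : Fin n => Real.sqrt (rho i) * nalf m (m + 2 * (j : ℕ)) (x i))ᵀ *
      (Matrix.of fun i j : Fin n => Real.sqrt (rho i) * nalf m (m + 2 * (j : ℕ)) (x i)) = 1 := by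
  have hx i : 0 < x i ∧ x i ^ 2 < 1 := by
    obtain ⟨⟨h₀, h₁⟩, -⟩ := hzero i
    exact ⟨h₀, by nlinarith⟩
  rw [mul_eq_one_comm]
  ext i k
  simp only [Matrix.mul_apply, Matrix.transpose_apply, Matrix.of_apply, Matrix.one_apply]
  have hsum : ∑ j : Fin n, Real.sqrt (rho i) * nalf m (m + 2 * j) (x i) *
      (Real.sqrt (rho k) * nalf m (m + 2 * j) (x k)) = Real.sqrt (rho i) * Real.sqrt (rho k) *
        ∑ j ∈ Finset.range n, nalf m (m + 2 * j) (x i) * nalf m (m + 2 * j) (x k) := by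
    rw [Finset.mul_sum, ← Fin.sum_univ_eq_sum_range]
    exact Finset.sum_congr rfl fun j _ => by ring
  rw [hsum]
  split_ifs with hik
  · subst hik
    have hρ : rho i = gaussWeight m n (x i) := hrho i
    rw [Real.mul_self_sqrt (hρ ▸ gaussWeight_nonneg m n (hx i).2.le), hρ]
    simpa only [sq] using gaussWeight_mul_sum_nalf_sq (hx i).1.ne' (hx i).2 (hzero i).2
  · have hne : x i ^ 2 ≠ x k ^ 2 := fun h =>
      hik (hmono.injective ((pow_left_inj₀ (hx i).1.le (hx k).1.le two_ne_zero).1 h))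
    rw [sum_nalf_mul_nalf_eq_zero (hx i).2 (hx k).2 hne (hzero i).2 (hzero k).2, mul_zero]

theorem transform_matrix_orthogonal_even (m n : ℕ) (hn : 0 < n) (x : Fin n → ℝ) (hmono : StrictMono x)
    (hzero : ∀ j, x j ∈ Set.Ioo (0 : ℝ) 1 ∧ nalf m (m + 2 * n) (x j) = 0)
    (hall : ∀ y ∈ Set.Ioo (0 : ℝ) 1, nalf m (m + 2 * n) y = 0 → ∃ j, y = x j)
    (rho : Fin n → ℝ)
    (hrho : ∀ j, rho j = 2 * (2 * m + 4 * n + 1) /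
      ((1 - x j ^ 2) * (deriv (nalf m (m + 2 * n)) (x j)) ^ 2)) :
    (Matrix.of fun i j : Fin n => Real.sqrt (rho i) * nalf m (m + 2 * (j : ℕ)) (x i))ᵀ *
      (Matrix.of fun i j : Fin n => Real.sqrt (rho i) * nalf m (m + 2 * (j : ℕ)) (x i)) = 1 :=
  transform_matrix_orthogonal_even_general m n x hmono hzero rho hrho
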